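/- Let h(u) = (1/(2π))·(√(1 − u²) + (π − arccos u)·u), so that h'(u) = (π − arccos u)/(2π). Then the function u ↦ h'(u)/u is convex on (0, 1), and for every u ∈ (1/√2, 1), √2·h'(1/√2) > h'(u)/u. -/

import Mathlib

open Real

/-! With `φ(u) = π - arccos u` and `t = u / √(1 - u²)`, the second derivative of `φ(u) / u` on
`(0, 1)` is `(2 φ(u) + t³ - 2t) / u³`. It is nonnegative because `2 φ(u) ≥ π > 2` there and
`t³ - 2t + 2 = (t - 1)² (t + 2) + t`. Convexity persists on `(0, 1]`, where `h'(u) / u` equals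
`1/2` at `u = 1` and `3√2/8 > 1/2` at `u = 1/√2`, so it stays below `3√2/8` in between. -/

/-- The ReLU interaction kernel `h(u) = (1/(2π))(√(1−u²) + (π − arccos u)u)`,
whose derivative is `h'(u) = (π − arccos u)/(2π)`. -/
noncomputable def hreluDeriv (u : ℝ) : ℝ := (π - Real.arccos u) / (2 * π)

theorem ConvexOn.lt_left_of_right_lt_left {𝕜 E β : Type*} [Semiring 𝕜] [PartialOrder 𝕜]
    [AddCommMonoid E] [AddCommMonoid β] [LinearOrder β] [IsOrderedCancelAddMonoid β]
    [Module 𝕜 E] [Module 𝕜 β] [PosSMulStrictMono 𝕜 β] {s : Set E} {f : E → β} {x y z : E}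
    (hf : ConvexOn 𝕜 s f) (hx : x ∈ s) (hy : y ∈ s) (hz : z ∈ openSegment 𝕜 x y)
    (hyx : f y < f x) : f z < f x := by
  rcases lt_or_ge (f y) (f z) with hyz | hzy
  · exact hf.lt_left_of_right_lt hx hy hz hyz
  · exact hzy.trans_lt hyx

namespace Real

variable {x : ℝ}

theorem hasDerivAt_inv_sqrt_one_sub_sq (h₁ : -1 < x) (h₂ : x < 1) :
    HasDerivAt (fun y => (√(1 - y ^ 2))⁻¹) (x / √(1 - x ^ 2) ^ 3) x := by
  have hpos : 0 < 1 - x ^ 2 := by nlinarith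
  have hs : √(1 - x ^ 2) ≠ 0 := (sqrt_pos.2 hpos).ne'
  have hsq : HasDerivAt (fun y => √(1 - y ^ 2)) (-(2 * x) / (2 * √(1 - x ^ 2))) x := by
    simpa using ((hasDerivAt_pow 2 x).const_sub 1).sqrt hpos.ne'
  refine (hsq.inv hs).congr_deriv ?_
  field_simp

theorem hasDerivAt_pi_sub_arccos (h₁ : -1 < x) (h₂ : x < 1) :
    HasDerivAt (fun y => π - arccos y) (√(1 - x ^ 2))⁻¹ x := by
  simpa using (hasDerivAt_arccos h₁.ne' h₂.ne).const_sub π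

theorem hasDerivAt_pi_sub_arccos_div (h₁ : -1 < x) (h₂ : x < 1) (h₀ : x ≠ 0) :
    HasDerivAt (fun y => (π - arccos y) / y)
      ((x / √(1 - x ^ 2) - (π - arccos x)) / x ^ 2) x := by
  refine ((hasDerivAt_pi_sub_arccos h₁ h₂).fun_div (hasDerivAt_id' x) h₀).congr_deriv ?_
  field_simp

theorem hasDerivAt_deriv_pi_sub_arccos_div (h₁ : -1 < x) (h₂ : x < 1) (h₀ : x ≠ 0) :
    HasDerivAt (fun y => (y / √(1 - y ^ 2) - (π - arccos y)) / y ^ 2)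
      ((x ^ 3 / √(1 - x ^ 2) ^ 3 - 2 * x / √(1 - x ^ 2) + 2 * (π - arccos x)) / x ^ 3) x := by
  have hs : √(1 - x ^ 2) ≠ 0 := (sqrt_pos.2 (by nlinarith)).ne'
  have hnum := ((hasDerivAt_id' x).fun_mul (hasDerivAt_inv_sqrt_one_sub_sq h₁ h₂)).fun_sub
    (hasDerivAt_pi_sub_arccos h₁ h₂)
  refine (hnum.fun_div (hasDerivAt_pow 2 x) (pow_ne_zero 2 h₀)).congr_deriv ?_
  field_simp
  ring

theorem deriv2_pi_sub_arccos_div_nonneg (h₀ : 0 < x) (h₁ : x < 1) :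
    0 ≤ (x ^ 3 / √(1 - x ^ 2) ^ 3 - 2 * x / √(1 - x ^ 2) + 2 * (π - arccos x)) / x ^ 3 := by
  have hs : 0 < √(1 - x ^ 2) := sqrt_pos.2 (by nlinarith)
  set t := x / √(1 - x ^ 2)
  have ht : 0 ≤ t := by positivity
  have harccos : π ≤ 2 * (π - arccos x) := by linarith [arccos_le_pi_div_two.2 h₀.le]
  have hcubic : 0 ≤ t ^ 3 - 2 * t + 2 := by nlinarith [mul_nonneg (sq_nonneg (t - 1)) ht]
  have ht_cube : x ^ 3 / √(1 - x ^ 2) ^ 3 - 2 * x / √(1 - x ^ 2) = t ^ 3 - 2 * t := by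
    rw [div_pow, mul_div_assoc]
  rw [ht_cube]
  exact div_nonneg (by linarith [pi_gt_three]) (by positivity)

theorem convexOn_pi_sub_arccos_div : ConvexOn ℝ (Set.Ioc 0 1) (fun x => (π - arccos x) / x) := by
  refine convexOn_of_hasDerivWithinAt2_nonneg (convex_Ioc 0 1)
    (f' := fun x => (x / √(1 - x ^ 2) - (π - arccos x)) / x ^ 2)
    (f'' := fun x =>
      (x ^ 3 / √(1 - x ^ 2) ^ 3 - 2 * x / √(1 - x ^ 2) + 2 * (π - arccos x)) / x ^ 3)
    ?_ ?_ ?_ ?_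
  · exact (continuous_const.sub continuous_arccos).continuousOn.div continuousOn_id
      fun x hx => hx.1.ne'
  all_goals rw [interior_Ioc]
  · exact fun x hx =>
      (hasDerivAt_pi_sub_arccos_div (by linarith [hx.1]) hx.2 hx.1.ne').hasDerivWithinAt
  · exact fun x hx =>
      (hasDerivAt_deriv_pi_sub_arccos_div (by linarith [hx.1]) hx.2 hx.1.ne').hasDerivWithinAt
  · exact fun x hx => deriv2_pi_sub_arccos_div_nonneg hx.1 hx.2

end Real

theorem convexOn_hreluDeriv_div : ConvexOn ℝ (Set.Ioc 0 1) (fun u => hreluDeriv u / u) := by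
  have h : (fun u => hreluDeriv u / u) = fun u => (2 * π)⁻¹ • ((π - arccos u) / u) := by
    ext u
    simp only [hreluDeriv, smul_eq_mul]
    ring
  rw [h]
  exact convexOn_pi_sub_arccos_div.smul (by positivity)

theorem hreluDeriv_one : hreluDeriv 1 = 1 / 2 := by
  rw [hreluDeriv, arccos_one, sub_zero]
  field_simp [pi_ne_zero]

theorem hreluDeriv_inv_sqrt_two : hreluDeriv (1 / √2) = 3 / 8 := by
  have h : 1 / √2 = cos (π / 4) := by
    rw [cos_pi_div_four, one_div, ← sqrt_div_self]
  rw [hreluDeriv, h, arccos_cos (by positivity) (by linarith [pi_pos])]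
  field_simp [pi_ne_zero]
  ring

/-- `h'(u)/u` is convex on `(0, 1)`, and for `u ∈ (1/√2, 1)` one has
`√2·h'(1/√2) > h'(u)/u`. -/
theorem hrelu_deriv_ratio_convex :
    ConvexOn ℝ (Set.Ioo (0 : ℝ) 1) (fun u => hreluDeriv u / u) ∧
    ∀ u ∈ Set.Ioo (1 / Real.sqrt 2) (1 : ℝ),
      hreluDeriv u / u < Real.sqrt 2 * hreluDeriv (1 / Real.sqrt 2) := by
  refine ⟨convexOn_hreluDeriv_div.subset Set.Ioo_subset_Ioc_self (convex_Ioo 0 1), ?_⟩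
  intro u hu
  have hsqrt : 4 / 3 < √2 := by rw [lt_sqrt (by norm_num)]; norm_num
  have hu₀ : 1 / √2 ∈ Set.Ioc (0 : ℝ) 1 :=
    ⟨by positivity, (div_le_one (by positivity)).2 (by linarith)⟩
  have hratio : hreluDeriv (1 / √2) / (1 / √2) = √2 * hreluDeriv (1 / √2) := by
    field_simp
  have hlt : hreluDeriv 1 / 1 < hreluDeriv (1 / √2) / (1 / √2) := by
    rw [hratio, hreluDeriv_one, hreluDeriv_inv_sqrt_two, div_one]
    linarith
  rw [← hratio]
  refine convexOn_hreluDeriv_div.lt_left_of_right_lt_left hu₀ ⟨zero_lt_one, le_rfl⟩ ?_ hlt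
  rwa [openSegment_eq_Ioo (hu.1.trans hu.2)]
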